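/- arXiv:2509.14179 — 2 statements merged into one kernel-verified Lean document; each statement's English description precedes it below -/
import Mathlib

section
/- Let R be a commutative ring, p and q distinct prime ideals of R, and κ(p), κ(q) their residue fields. Then κ(q) ⊗^L_R κ(p) = 0 in the derived category D(R). -/
/-!
Pick `x` lying in one of the two primes but not in the other. Multiplication by `x` is zero on
the residue field of the prime containing `x` and invertible on the other one. On
`Tor_n(κ(q), κ(p))` the actions of `x` through either factor agree, so this endomorphism is both
zero and an isomorphism, and `Tor_n(κ(q), κ(p))` vanishes.
-/

open CategoryTheory CategoryTheory.Limits

open MonoidalCategory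

universe u

namespace CategoryTheory

lemma ProjectiveResolution.smul_id_comp_π {C : Type*} [Category C] [Abelian C]
    {R : Type*} [Semiring R] [Linear R C] {B : C} (P : ProjectiveResolution B) (x : R) :
    (x • 𝟙 P.complex) ≫ P.π = P.π ≫ (ChainComplex.single₀ C).map (x • 𝟙 B) := by
  ext
  simp only [HomologicalComplex.comp_f, HomologicalComplex.smul_f_apply,
    ChainComplex.single₀_map_f_zero, Linear.smul_comp, Category.id_comp]
  erw [Linear.comp_smul, Category.comp_id]

section Tor

variable {C : Type*} [Category C] [MonoidalCategory C] [Abelian C] [MonoidalPreadditive C]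
  [HasProjectiveResolutions C]

lemma Tor_obj_map_zero (n : ℕ) (A B : C) :
    ((Tor C n).obj A).map (0 : B ⟶ B) = 0 := by
  let P := projectiveResolution B
  rw [Tor_obj, Functor.leftDerived_map_eq _ n (0 : B ⟶ B) (0 : P.complex ⟶ P.complex) (by simp),
    Functor.map_zero, zero_comp, comp_zero]

lemma Tor_map_zero_app (n : ℕ) (A B : C) :
    ((Tor C n).map (0 : A ⟶ A)).app B = 0 := by
  let P := projectiveResolution B
  have hzero : (NatTrans.mapHomologicalComplex ((tensoringLeft C).map (0 : A ⟶ A)) _).app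
      P.complex = 0 := by
    ext
    exact MonoidalPreadditive.zero_whiskerRight
  rw [Tor_map, ProjectiveResolution.leftDerived_app_eq _ P n, hzero, Functor.map_zero, zero_comp,
    comp_zero]
  rfl

variable {R : Type*} [CommSemiring R] [Linear R C] [MonoidalLinear R C]

lemma Tor_map_smul_id_app (n : ℕ) (A B : C) (x : R) :
    ((Tor C n).map (x • 𝟙 A)).app B = ((Tor C n).obj A).map (x • 𝟙 B) := by
  let P := projectiveResolution B
  rw [Tor_map, ProjectiveResolution.leftDerived_app_eq _ P n]
  erw [Functor.leftDerived_map_eq _ n (x • 𝟙 B) (x • 𝟙 P.complex) (P.smul_id_comp_π x)]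
  congr 2
  rw [Functor.comp_map]
  congr 1
  ext
  simp only [NatTrans.mapHomologicalComplex_app_f, curriedTensor_map_app,
    MonoidalLinear.smul_whiskerRight, id_whiskerRight, Functor.map_smul, Functor.map_id,
    HomologicalComplex.smul_f_apply, HomologicalComplex.id_f]
  rfl

lemma isZero_Tor_of_smul_id_eq_zero_of_isIso (n : ℕ) {A B : C} (x : R) (hA : x • 𝟙 A = 0)
    [IsIso (x • 𝟙 B)] : IsZero (((Tor C n).obj A).obj B) := by
  have hzero : ((Tor C n).obj A).map (x • 𝟙 B) = 0 := by
    rw [← Tor_map_smul_id_app, hA, Tor_map_zero_app]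
  exact IsZero.of_mono_eq_zero _ hzero

lemma isZero_Tor_of_isIso_of_smul_id_eq_zero (n : ℕ) {A B : C} (x : R) [IsIso (x • 𝟙 A)]
    (hB : x • 𝟙 B = 0) : IsZero (((Tor C n).obj A).obj B) := by
  have hzero : ((Tor C n).map (x • 𝟙 A)).app B = 0 := by
    rw [Tor_map_smul_id_app, hB, Tor_obj_map_zero]
  exact IsZero.of_mono_eq_zero _ hzero

end Tor

end CategoryTheory

namespace ModuleCat

variable {R S : Type*} [CommRing R] [Ring S] [Algebra R S] {x : R}

lemma smul_id_eq_zero_of_algebraMap_eq_zero (hx : algebraMap R S x = 0) :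
    x • 𝟙 (ModuleCat.of R S) = 0 := by
  ext m
  simp [Algebra.smul_def, hx]

lemma isIso_smul_id_of_isUnit_algebraMap (hx : IsUnit (algebraMap R S x)) :
    IsIso (x • 𝟙 (ModuleCat.of R S)) := by
  have hmul : ⇑(ConcreteCategory.hom (x • 𝟙 (ModuleCat.of R S))) = (algebraMap R S x * ·) := by
    ext m
    simp [Algebra.smul_def]
  rw [ConcreteCategory.isIso_iff_bijective, hmul]
  exact hx.unit.mulLeft_bijective

end ModuleCat

variable (R : Type u) [CommRing R]

/-- The residue field `κ(p) = R_p / p R_p` of a commutative ring at a prime ideal `p`,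
as an `R`-module. -/
noncomputable abbrev residueFieldAt (p : Ideal R) [p.IsPrime] : ModuleCat.{u} R :=
  ModuleCat.of R (IsLocalRing.ResidueField (Localization.AtPrime p))

lemma smul_id_residueFieldAt_eq_zero {p : Ideal R} [p.IsPrime] {x : R} (hx : x ∈ p) :
    x • 𝟙 (residueFieldAt R p) = 0 :=
  ModuleCat.smul_id_eq_zero_of_algebraMap_eq_zero (Ideal.algebraMap_residueField_eq_zero.2 hx)

lemma isIso_smul_id_residueFieldAt {p : Ideal R} [p.IsPrime] {x : R} (hx : x ∉ p) :
    IsIso (x • 𝟙 (residueFieldAt R p)) :=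
  ModuleCat.isIso_smul_id_of_isUnit_algebraMap
    (isUnit_iff_ne_zero.2 (mt Ideal.algebraMap_residueField_eq_zero.1 hx))

/-- For distinct primes `p ≠ q` of a commutative ring `R`, the derived tensor product
`κ(q) ⊗^L_R κ(p)` vanishes; equivalently, `Tor_n^R(κ(q), κ(p)) = 0` for all `n`. -/
theorem residueField_lTensor_residueField_eq_zero
    (p q : Ideal R) [p.IsPrime] [q.IsPrime] (hpq : p ≠ q) :
    ∀ n : ℕ, IsZero (((Tor (ModuleCat.{u} R) n).obj (residueFieldAt R q)).obj
      (residueFieldAt R p)) := by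
  intro n
  obtain ⟨x, hxp, hxq⟩ | ⟨x, hxq, hxp⟩ : (∃ x ∈ p, x ∉ q) ∨ (∃ x ∈ q, x ∉ p) := by
    by_contra! h
    exact hpq (le_antisymm h.1 h.2)
  · have := isIso_smul_id_residueFieldAt R hxq
    exact isZero_Tor_of_isIso_of_smul_id_eq_zero n x (smul_id_residueFieldAt_eq_zero R hxp)
  · have := isIso_smul_id_residueFieldAt R hxp
    exact isZero_Tor_of_smul_id_eq_zero_of_isIso n x (smul_id_residueFieldAt_eq_zero R hxq)
end

section
/- A commutative ring R is semi-local semi-artinian if and only if R is isomorphic to a finite direct product of local rings each of whose maximal ideal is T-nilpotent. -/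
universe u

/-- An ideal `I` is T-nilpotent if for every sequence `r₀, r₁, …` of elements of `I`
some finite product `r₀ r₁ ⋯ rₙ` vanishes. -/
def Ideal.IsTNilpotent {A : Type*} [CommRing A] (I : Ideal A) : Prop :=
  ∀ r : ℕ → A, (∀ n, r n ∈ I) → ∃ n : ℕ, (∏ i ∈ Finset.range (n + 1), r i) = 0

/-- A commutative ring is semi-local if it has only finitely many maximal ideals. -/
def IsSemiLocalRing (R : Type*) [CommRing R] : Prop :=
  {I : Ideal R | I.IsMaximal}.Finite

/-- A commutative ring is semi-artinian if every proper ideal is covered by a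
strictly larger ideal which is a cover (equivalently, every nonzero quotient
module of `R` has nonzero socle). -/
def IsSemiArtinianRing (R : Type*) [CommRing R] : Prop :=
  ∀ I : Ideal R, I ≠ ⊤ → ∃ J : Ideal R, I ⋖ J

/-!
In a semi-artinian ring every nonzero cyclic module `R/I` contains a simple submodule
`Rx ≅ R/(I : x)`, and the Jacobson radical kills it. Bass's argument turns this into
T-nilpotence of the Jacobson radical; conversely, T-nilpotence of the maximal ideal of a local
ring produces such an `x`. In a semi-local ring with nil Jacobson radical, the map
`R → ∏ R/𝔪` is onto with nil kernel, so the standard idempotents lift to complete orthogonal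
idempotents `eᵢ` of `R` and `R ≃ ∏ R/(1 - eᵢ)`; each factor is local, and its maximal ideal is
the image of the Jacobson radical. Both properties pass to finite products through
`Ideal (∏ Aᵢ) ≃o ∏ Ideal Aᵢ`.
-/

open Ideal IsLocalRing Finset

variable {R S : Type*} [CommRing R] [CommRing S]

theorem Ideal.IsTNilpotent.mono {I J : Ideal R} (hJ : J.IsTNilpotent) (h : I ≤ J) :
    I.IsTNilpotent :=
  fun r hr => hJ r fun n => h (hr n)

theorem Ideal.IsTNilpotent.map_of_surjective {f : R →+* S} (hf : Function.Surjective f)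
    {I : Ideal R} (hI : I.IsTNilpotent) : (I.map f).IsTNilpotent := by
  intro s hs
  choose r hrI hrs using fun n => (mem_map_iff_of_surjective f hf).1 (hs n)
  obtain ⟨n, hn⟩ := hI r hrI
  exact ⟨n, by simp only [← hrs, ← map_prod, hn, map_zero]⟩

theorem Ideal.IsTNilpotent.isNilpotent_of_mem {I : Ideal R} (hI : I.IsTNilpotent) {x : R}
    (hx : x ∈ I) : IsNilpotent x := by
  obtain ⟨n, hn⟩ := hI (fun _ => x) (fun _ => hx)
  exact ⟨n + 1, by simpa using hn⟩

theorem Ideal.colon_span_singleton_ne_top {I : Ideal R} {x : R} (hx : x ∉ I) :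
    I.colon (span {x}) ≠ ⊤ := fun h =>
  hx (by simpa using mem_colon_span_singleton.1 (h ▸ Submodule.mem_top : (1 : R) ∈ _))

/- If no `y ∉ I` were killed by `N` into `I`, we could multiply `1` successively by elements
of `N` without ever landing in `I`; T-nilpotence makes one of these partial products vanish. -/
theorem Ideal.IsTNilpotent.exists_notMem_le_colon {N I : Ideal R} (hN : N.IsTNilpotent)
    (hI : I ≠ ⊤) : ∃ y ∉ I, N ≤ I.colon (span {y}) := by
  by_contra! h
  choose F hFN hFI using fun y : {y // y ∉ I} => SetLike.not_le_iff_exists.1 (h y.1 y.2)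
  let step : {y // y ∉ I} → {y // y ∉ I} :=
    fun y => ⟨F y * y, fun hy => hFI y (mem_colon_span_singleton.2 hy)⟩
  let c : ℕ → {y // y ∉ I} := fun k => step^[k] ⟨1, (ne_top_iff_one I).1 hI⟩
  have hc : ∀ k, (c k : R) = ∏ j ∈ range k, F (c j) := by
    intro k
    induction k with
    | zero => rfl
    | succ k ih =>
      change ((step^[k + 1] _ : {y // y ∉ I}) : R) = _
      rw [Function.iterate_succ_apply', prod_range_succ, mul_comm]
      exact congrArg (F (c k) * ·) ih
  obtain ⟨n, hn⟩ := hN (fun j => F (c j)) (fun j => hFN (c j))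
  exact (c (n + 1)).2 (by rw [hc, hn]; exact I.zero_mem)

/- Zorn gives an ideal `I` maximal among those missing every partial product `r₀ ⋯ rₖ`;
an element `y ∉ I` with `N y ⊆ I` then pushes the next partial product into `I`. -/
theorem Ideal.isTNilpotent_of_forall_exists_notMem_le_colon {N : Ideal R}
    (h : ∀ I : Ideal R, I ≠ ⊤ → ∃ y ∉ I, N ≤ I.colon (span {y})) : N.IsTNilpotent := by
  intro r hr
  by_contra! hne
  let p : ℕ → R := fun k => ∏ i ∈ range (k + 1), r i
  let S : Set (Ideal R) := {I | ∀ k, p k ∉ I}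
  have hchain : ∀ c ⊆ S, IsChain (· ≤ ·) c → ∀ J ∈ c, ∃ ub ∈ S, ∀ K ∈ c, K ≤ ub := by
    intro c hcS hc J hJ
    refine ⟨sSup c, fun k hk => ?_, fun K hK => le_sSup hK⟩
    obtain ⟨K, hKc, hkK⟩ := (Submodule.mem_sSup_of_directed ⟨J, hJ⟩ hc.directedOn).1 hk
    exact hcS hKc k hkK
  obtain ⟨I, -, hImax⟩ := zorn_le_nonempty₀ S hchain ⊥ fun k hk => hne k hk
  obtain ⟨y, hyI, hNy⟩ := h I fun hI => hImax.1 0 (hI ▸ Submodule.mem_top)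
  obtain ⟨k, hk⟩ : ∃ k, p k ∈ I ⊔ span {y} := by
    by_contra! hk
    exact hyI (hImax.2 hk le_sup_left (mem_sup_right (mem_span_singleton_self y)))
  obtain ⟨a, ha, b, hb, hab⟩ := Submodule.mem_sup.1 hk
  obtain ⟨t, rfl⟩ := mem_span_singleton'.1 hb
  have hry : r (k + 1) * y ∈ I := mem_colon_span_singleton.1 (hNy (hr (k + 1)))
  refine hImax.1 (k + 1) ?_
  have : p (k + 1) = r (k + 1) * a + t * (r (k + 1) * y) := by
    simp only [p, prod_range_succ _ (k + 1), ← hab]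
    ring
  rw [this]
  exact I.add_mem (I.mul_mem_left _ ha) (I.mul_mem_left _ hry)

/- `(I ⊔ Rx)/I ≅ R/(I : x)` is simple exactly when `(I : x)` is maximal. -/
theorem Ideal.covBy_sup_span_singleton_iff {I : Ideal R} {x : R} (hx : x ∉ I) :
    I ⋖ I ⊔ span {x} ↔ (I.colon (span {x})).IsMaximal := by
  constructor
  · intro h
    refine isMaximal_iff.2 ⟨fun h1 => colon_span_singleton_ne_top hx ((eq_top_iff_one _).2 h1),
      fun J s hJ hs hsJ => ?_⟩
    have hsx : s * x ∉ I := fun h' => hs (mem_colon_span_singleton.2 h')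
    have hsup : I ⊔ span {s * x} = I ⊔ span {x} := by
      refine (h.eq_or_eq le_sup_left (sup_le_sup_left ?_ _)).resolve_left fun he =>
        hsx (he ▸ mem_sup_right (mem_span_singleton_self _))
      exact (span_singleton_le_iff_mem _).2 (mul_mem_left _ _ (mem_span_singleton_self x))
    obtain ⟨a, ha, b, hb, hab⟩ :=
      Submodule.mem_sup.1 (hsup ▸ mem_sup_right (mem_span_singleton_self x) : x ∈ I ⊔ _)
    obtain ⟨t, rfl⟩ := mem_span_singleton'.1 hb
    have h1 : 1 - t * s ∈ I.colon (span {x}) := by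
      rw [mem_colon_span_singleton]
      convert ha using 1
      linear_combination -hab
    simpa using J.add_mem (hJ h1) (J.mul_mem_left t hsJ)
  · intro hmax
    refine ⟨left_lt_sup.2 fun h => hx (h (mem_span_singleton_self x)), fun K hIK hK => ?_⟩
    obtain ⟨k, hkK, hkI⟩ := SetLike.exists_of_lt hIK
    obtain ⟨a, ha, b, hb, rfl⟩ := Submodule.mem_sup.1 (hK.le hkK)
    obtain ⟨t, rfl⟩ := mem_span_singleton'.1 hb
    have ht : t ∉ I.colon (span {x}) := fun ht => hkI (I.add_mem ha (mem_colon_span_singleton.1 ht))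
    obtain ⟨s, c, hc, hsc⟩ := hmax.exists_inv ht
    have htx : t * x ∈ K := by simpa using K.sub_mem hkK (hIK.le ha)
    have hxK : x ∈ K := by
      convert K.add_mem (K.mul_mem_left s htx) (hIK.le (mem_colon_span_singleton.1 hc)) using 1
      linear_combination (-x) * hsc
    exact hK.not_ge (sup_le hIK.le ((span_singleton_le_iff_mem _).2 hxK))

theorem isSemiArtinianRing_iff :
    IsSemiArtinianRing R ↔ ∀ I : Ideal R, I ≠ ⊤ → ∃ x ∉ I, (I.colon (span {x})).IsMaximal := by
  refine forall₂_congr fun I _ => ⟨fun ⟨J, h⟩ => ?_, fun ⟨x, hx, hmax⟩ =>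
    ⟨_, (covBy_sup_span_singleton_iff hx).2 hmax⟩⟩
  obtain ⟨x, hxJ, hxI⟩ := SetLike.exists_of_lt h.lt
  have hJ : I ⊔ span {x} = J :=
    (h.eq_or_eq le_sup_left (sup_le h.le ((span_singleton_le_iff_mem _).2 hxJ))).resolve_left
      fun he => hxI (he ▸ mem_sup_right (mem_span_singleton_self x))
  exact ⟨x, hxI, (covBy_sup_span_singleton_iff hxI).1 (hJ ▸ h)⟩

theorem IsSemiArtinianRing.isTNilpotent_jacobson (h : IsSemiArtinianRing R) :
    (⊥ : Ideal R).jacobson.IsTNilpotent :=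
  isTNilpotent_of_forall_exists_notMem_le_colon fun I hI =>
    let ⟨x, hx, hmax⟩ := isSemiArtinianRing_iff.1 h I hI
    ⟨x, hx, sInf_le ⟨bot_le, hmax⟩⟩

theorem IsLocalRing.isSemiArtinianRing [IsLocalRing R] (h : (maximalIdeal R).IsTNilpotent) :
    IsSemiArtinianRing R :=
  isSemiArtinianRing_iff.2 fun _ hI =>
    let ⟨y, hy, hle⟩ := h.exists_notMem_le_colon hI
    ⟨y, hy, (maximalIdeal.isMaximal R).eq_of_le (colon_span_singleton_ne_top hy) hle ▸
      maximalIdeal.isMaximal R⟩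

theorem IsSemiArtinianRing.of_ringEquiv (e : R ≃+* S) (h : IsSemiArtinianRing S) :
    IsSemiArtinianRing R := by
  intro I hI
  let o : Ideal S ≃o Ideal R := relIsoOfBijective (e : R →+* S) e.bijective
  obtain ⟨J, hJ⟩ := h (o.symm I) fun h' => hI (by simpa using congrArg o h')
  exact ⟨o J, by simpa using (apply_covBy_apply_iff o).2 hJ⟩

theorem isSemiArtinianRing_pi {ι : Type*} [Finite ι] {A : ι → Type*} [∀ i, CommRing (A i)]
    (h : ∀ i, IsSemiArtinianRing (A i)) : IsSemiArtinianRing (∀ i, A i) := by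
  classical
  intro I hI
  let o := Ideal.piOrderIso (R := A)
  obtain ⟨i, hi⟩ : ∃ i, o I i ≠ ⊤ := by
    by_contra! h'
    exact hI (o.injective ((funext h').trans o.map_top.symm))
  obtain ⟨J, hJ⟩ := h i (o I i) hi
  refine ⟨o.symm (Function.update (o I) i J), ?_⟩
  rw [← apply_covBy_apply_iff o, o.apply_symm_apply]
  exact Pi.covBy_iff_exists_right_eq.2 ⟨i, J, hJ, rfl⟩

theorem IsLocalRing.isSemiLocalRing [IsLocalRing R] : IsSemiLocalRing R :=
  (Set.finite_singleton (maximalIdeal R)).subset fun _ hI => eq_maximalIdeal hI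

theorem IsSemiLocalRing.of_ringEquiv (e : R ≃+* S) (h : IsSemiLocalRing S) :
    IsSemiLocalRing R :=
  (h.image (comap e)).subset fun I (_ : I.IsMaximal) =>
    ⟨I.map e, map_isMaximal_of_equiv e, comap_map_of_bijective e e.bijective⟩

theorem isSemiLocalRing_pi {ι : Type*} [Finite ι] {A : ι → Type*} [∀ i, CommRing (A i)]
    (h : ∀ i, IsSemiLocalRing (A i)) : IsSemiLocalRing (∀ i, A i) := by
  classical
  let o := Ideal.piOrderIso (R := A)
  refine (Set.finite_iUnion fun i =>
    (h i).image fun J => o.symm (Function.update ⊤ i J)).subset fun I (hI : I.IsMaximal) => ?_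
  have : o I ⋖ ⊤ := covBy_top_iff.2 ((o.isCoatom_iff I).2 (isMaximal_def.1 hI))
  obtain ⟨i, J, hJ, hIJ⟩ := Pi.covBy_iff_exists_left_eq.1 this
  exact Set.mem_iUnion.2 ⟨i, J, isMaximal_def.2 (covBy_top_iff.1 hJ),
    show o.symm _ = I by rw [← hIJ, o.symm_apply_apply]⟩

theorem exists_completeOrthogonalIdempotents_mem_iff_ne {ι : Type*} [Fintype ι]
    {m : ι → Ideal R} (hm : ∀ i, (m i).IsMaximal) (hinj : Function.Injective m)
    (hnil : ∀ x ∈ ⨅ i, m i, IsNilpotent x) :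
    ∃ e : ι → R, CompleteOrthogonalIdempotents e ∧ ∀ i j, e i ∈ m j ↔ i ≠ j := by
  classical
  let f : R →+* ∀ i, R ⧸ m i := RingHom.pi fun i => Ideal.Quotient.mk (m i)
  have hf : Function.Surjective f := fun y =>
    let ⟨r, hr⟩ := pi_quotient_surjective (fun i j hij => isCoprime_iff_sup_eq.2
      ((hm i).coprime_of_ne (hm j) (hinj.ne hij))) y
    ⟨r, funext hr⟩
  obtain ⟨e, he, hfe⟩ :=
    (CompleteOrthogonalIdempotents.single fun i => R ⧸ m i).lift_of_isNilpotent_ker f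
      (fun x hx => hnil x (ker_Pi_Quotient_mk m ▸ hx)) fun _ => RingHom.mem_range.2 (hf _)
  refine ⟨e, he, fun i j => ?_⟩
  have hej : Ideal.Quotient.mk (m j) (e i) = (Pi.single i 1 : ∀ k, R ⧸ m k) j :=
    congrFun (congrFun hfe i) j
  have := hm j
  rw [← Ideal.Quotient.eq_zero_iff_mem, hej]
  rcases eq_or_ne i j with rfl | h
  · simp
  · simp [h]

theorem Ideal.eq_map_mk_of_forall_isMaximal_eq {I M : Ideal R}
    (h : ∀ N : Ideal R, N.IsMaximal → I ≤ N → N = M) {N : Ideal (R ⧸ I)} (hN : N.IsMaximal) :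
    N = M.map (Ideal.Quotient.mk I) := by
  have hIN : I ≤ N.comap (Ideal.Quotient.mk I) := fun x hx => by
    simp [Ideal.Quotient.eq_zero_iff_mem.2 hx]
  rw [← h _ (comap_isMaximal_of_surjective _ Ideal.Quotient.mk_surjective) hIN,
    map_comap_of_surjective _ Ideal.Quotient.mk_surjective]

theorem isLocalRing_quotient_of_forall_isMaximal_eq {I M : Ideal R} (hM : M.IsMaximal)
    (hIM : I ≤ M) (h : ∀ N : Ideal R, N.IsMaximal → I ≤ N → N = M) : IsLocalRing (R ⧸ I) := by
  have : Nontrivial (R ⧸ I) := Ideal.Quotient.nontrivial_iff.2 (ne_top_of_le_ne_top hM.ne_top hIM)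
  obtain ⟨N, hN⟩ := exists_maximal (R ⧸ I)
  exact of_unique_max_ideal ⟨N, hN, fun N' hN' =>
    (eq_map_mk_of_forall_isMaximal_eq h hN').trans (eq_map_mk_of_forall_isMaximal_eq h hN).symm⟩

theorem isTNilpotent_maximalIdeal_quotient_of_forall_isMaximal_eq {I M N : Ideal R}
    [IsLocalRing (R ⧸ I)] (h : ∀ N : Ideal R, N.IsMaximal → I ≤ N → N = M) (hMN : M ≤ N ⊔ I)
    (hN : N.IsTNilpotent) : (maximalIdeal (R ⧸ I)).IsTNilpotent := by
  refine (hN.map_of_surjective Ideal.Quotient.mk_surjective).mono ?_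
  calc maximalIdeal (R ⧸ I) = M.map (Ideal.Quotient.mk I) :=
        eq_map_mk_of_forall_isMaximal_eq h (maximalIdeal.isMaximal _)
    _ ≤ (N ⊔ I).map (Ideal.Quotient.mk I) := map_mono hMN
    _ = N.map (Ideal.Quotient.mk I) := by rw [Ideal.map_sup, map_quotient_self, sup_bot_eq]

theorem IsSemiLocalRing.exists_pi_isLocalRing_of_isTNilpotent_jacobson {R : Type u} [CommRing R]
    (h : IsSemiLocalRing R) (hJ : (⊥ : Ideal R).jacobson.IsTNilpotent) :
    ∃ (n : ℕ) (A : Fin n → Type u) (hcr : ∀ i, CommRing (A i))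
      (hloc : ∀ i, letI := hcr i; IsLocalRing (A i)),
      (∀ i, letI := hcr i; letI := hloc i;
        (IsLocalRing.maximalIdeal (A i)).IsTNilpotent) ∧
      Nonempty (R ≃+* ∀ i, A i) := by
  obtain ⟨n, m, hrange⟩ := h.fin_embedding
  have hmax : ∀ i, (m i).IsMaximal := fun i => hrange.subset ⟨i, rfl⟩
  have hsurj : ∀ N : Ideal R, N.IsMaximal → ∃ i, m i = N := fun N hN => hrange.symm.subset hN
  have hjac : ⨅ i, m i = (⊥ : Ideal R).jacobson := by
    rw [jacobson, ← sInf_range, hrange]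
    simp
  obtain ⟨e, he, hmem⟩ := exists_completeOrthogonalIdempotents_mem_iff_ne hmax m.injective
    fun x hx => hJ.isNilpotent_of_mem (hjac ▸ hx)
  have hle : ∀ i, span {1 - e i} ≤ m i := fun i => (span_singleton_le_iff_mem _).2 <|
    ((hmax i).isPrime.mem_or_mem ((he.idem i).mul_one_sub_self ▸ (m i).zero_mem)).resolve_left
      fun h => (hmem i i).1 h rfl
  have huniq : ∀ i N, N.IsMaximal → span {1 - e i} ≤ N → N = m i := by
    rintro i N hN hN'
    obtain ⟨j, rfl⟩ := hsurj N hN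
    by_contra hji
    refine (hmax j).ne_top ((eq_top_iff_one _).2 ?_)
    simpa using add_mem ((hmem i j).2 fun h => hji (h ▸ rfl)) (hN' (mem_span_singleton_self _))
  have hsup : ∀ i, m i ≤ (⊥ : Ideal R).jacobson ⊔ span {1 - e i} := by
    intro i x hx
    have hxe : x * e i ∈ ⨅ j, m j := mem_iInf.2 fun j => by
      rcases eq_or_ne i j with rfl | hij
      · exact mul_mem_right _ _ hx
      · exact mul_mem_left _ _ ((hmem i j).2 hij)
    convert add_mem (mem_sup_left (hjac ▸ hxe))
      (mem_sup_right (mul_mem_left _ x (mem_span_singleton_self (1 - e i)))) using 1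
    ring
  have hloc := fun i => isLocalRing_quotient_of_forall_isMaximal_eq (hmax i) (hle i) (huniq i)
  exact ⟨n, fun i => R ⧸ span {1 - e i}, fun _ => inferInstance, hloc,
    fun i => isTNilpotent_maximalIdeal_quotient_of_forall_isMaximal_eq (huniq i) (hsup i) hJ,
    ⟨RingEquiv.ofBijective _ he.bijective_pi⟩⟩

/-- A commutative ring is semi-local and semi-artinian (i.e. perfect) if and only if
it is isomorphic to a finite direct product of local rings whose maximal ideals
are T-nilpotent. -/
theorem isSemiLocal_and_isSemiArtinian_iff_finite_product_of_local_TNilpotent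
    (R : Type u) [CommRing R] :
    (IsSemiLocalRing R ∧ IsSemiArtinianRing R) ↔
    ∃ (n : ℕ) (A : Fin n → Type u) (hcr : ∀ i, CommRing (A i))
      (hloc : ∀ i, letI := hcr i; IsLocalRing (A i)),
      (∀ i, letI := hcr i; letI := hloc i;
        (IsLocalRing.maximalIdeal (A i)).IsTNilpotent) ∧
      Nonempty (R ≃+* ∀ i, A i) := by
  constructor
  · rintro ⟨hSL, hSA⟩
    exact hSL.exists_pi_isLocalRing_of_isTNilpotent_jacobson hSA.isTNilpotent_jacobson
  · rintro ⟨n, A, hcr, hloc, hT, ⟨φ⟩⟩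
    exact ⟨(isSemiLocalRing_pi fun _ => isSemiLocalRing).of_ringEquiv φ,
      (isSemiArtinianRing_pi fun i => isSemiArtinianRing (hT i)).of_ringEquiv φ⟩
end
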